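/- Let (W^t) be a real-valued stochastic process satisfying the AR(1) recursion W^t = c + φ W^{t-1} + ε^t where 0 < φ < 1, c ≥ 0, and (ε^t) are i.i.d. with mean E[ε] and variance σ² > 0, independent of past W's. Then for weights β_k = φ·1{k=1} + (1-φ)/K (k = 1,...,K), which are nonnegative and sum to 1, the residual distributional variation E[(W^t − Σ_{k=1}^K β_k W^{t-k})²] converges, as K → ∞, to the infimum over all β in the simplex of E[(W^t − Σ_{k=1}^K β_k W^{t-k})²], assuming the process is weakly stationary. -/

import Mathlib

open MeasureTheory ProbabilityTheory Filter Finset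


lemma mulInt {Ω : Type*} [MeasurableSpace Ω] {μ : Measure Ω}
    {f g : Ω → ℝ} (hf : MemLp f 2 μ) (hg : MemLp g 2 μ) :
    Integrable (fun ω => f ω * g ω) μ := by
  have h := hg.smul (r := 1) hf
  rw [memLp_one_iff_integrable] at h
  exact h

lemma geomBound2 {φ : ℝ} (hφ0 : 0 ≤ φ) (hφ1 : φ < 1) (n : ℕ) :
    ∑ i ∈ Finset.range n, φ ^ i ≤ 1 / (1 - φ) := by
  have h1 : (0:ℝ) < 1 - φ := by linarith
  rw [geom_sum_eq (ne_of_lt hφ1)]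
  have h2 : (φ^n - 1)/(φ - 1) = (1 - φ^n)/(1 - φ) := by
    rw [← neg_div_neg_eq]; ring_nf
  rw [h2, div_le_div_iff₀ h1 h1]
  have := pow_nonneg hφ0 n
  nlinarith

lemma doubleGeomBound {φ : ℝ} (hφ0 : 0 ≤ φ) (hφ1 : φ < 1) (K : ℕ) :
    ∑ i ∈ Finset.Icc 1 K, ∑ j ∈ Finset.Icc 1 K, φ ^ ((i:ℤ) - j).natAbs
      ≤ 2 * K / (1 - φ) := by
  have h1 : (0:ℝ) < 1 - φ := by linarith
  have inner : ∀ i ∈ Finset.Icc 1 K,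
      ∑ j ∈ Finset.Icc 1 K, φ ^ ((i:ℤ) - j).natAbs ≤ 2 / (1 - φ) := by
    intro i hi
    simp only [Finset.mem_Icc] at hi
    rw [← Finset.sum_filter_add_sum_filter_not (Finset.Icc 1 K) (fun j => j ≤ i)]
    have key : ∀ (s : Finset ℕ) (f : ℕ → ℕ), (∀ a ∈ s, ∀ b ∈ s, f a = f b → a = b) →
        (∀ a ∈ s, f a < K) → (∀ j ∈ s, ((i:ℤ) - j).natAbs = f j) →
        ∑ j ∈ s, φ ^ ((i:ℤ) - j).natAbs ≤ 1 / (1 - φ) := by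
      intro s f hinj hlt habs
      have e1 : ∑ j ∈ s, φ ^ ((i:ℤ) - j).natAbs = ∑ d ∈ s.image f, φ ^ d := by
        rw [Finset.sum_image hinj]
        exact Finset.sum_congr rfl fun j hj => by rw [habs j hj]
      rw [e1]
      calc ∑ d ∈ s.image f, φ ^ d ≤ ∑ d ∈ Finset.range K, φ ^ d := by
            apply Finset.sum_le_sum_of_subset_of_nonneg
            · intro d hd
              simp only [Finset.mem_image] at hd
              obtain ⟨j, hj, rfl⟩ := hd
              exact Finset.mem_range.mpr (hlt j hj)
            · intro d _ _; exact pow_nonneg hφ0 d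
        _ ≤ 1 / (1 - φ) := geomBound2 hφ0 hφ1 K
    have p1 := key ((Finset.Icc 1 K).filter (fun j => j ≤ i)) (fun j => i - j)
      (by intro a ha b hb h; simp only [Finset.mem_filter, Finset.mem_Icc] at ha hb; omega)
      (by intro a ha; simp only [Finset.mem_filter, Finset.mem_Icc] at ha; omega)
      (by intro j hj; simp only [Finset.mem_filter, Finset.mem_Icc] at hj; omega)
    have p2 := key ((Finset.Icc 1 K).filter (fun j => ¬ j ≤ i)) (fun j => j - i)
      (by intro a ha b hb h; simp only [Finset.mem_filter, Finset.mem_Icc] at ha hb; omega)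
      (by intro a ha; simp only [Finset.mem_filter, Finset.mem_Icc] at ha; omega)
      (by intro j hj; simp only [Finset.mem_filter, Finset.mem_Icc] at hj; omega)
    have : (2:ℝ) / (1 - φ) = 1/(1-φ) + 1/(1-φ) := by ring
    rw [this]
    exact add_le_add p1 p2
  calc ∑ i ∈ Finset.Icc 1 K, ∑ j ∈ Finset.Icc 1 K, φ ^ ((i:ℤ) - j).natAbs
      ≤ ∑ _i ∈ Finset.Icc 1 K, 2 / (1 - φ) := Finset.sum_le_sum inner
    _ = K * (2 / (1 - φ)) := by rw [Finset.sum_const, Nat.card_Icc]; simp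
    _ = 2 * K / (1 - φ) := by ring

theorem ar1_recent_data_weights_asymptotically_optimal
    {Ω : Type*} [MeasurableSpace Ω] (μ : Measure Ω) [IsProbabilityMeasure μ]
    (W ε : ℤ → Ω → ℝ) (c φ Eε σ2 : ℝ) (hφ0 : 0 < φ) (hφ1 : φ < 1) (hc : 0 ≤ c)
    (hσ : 0 < σ2)
    (hmeasW : ∀ t, Measurable (W t)) (hmeasε : ∀ t, Measurable (ε t))
    -- AR(1) recursion
    (hrec : ∀ t : ℤ, ∀ᵐ ω ∂μ, W t ω = c + φ * W (t - 1) ω + ε t ω)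
    -- (ε^t) i.i.d. with mean Eε and variance σ² > 0
    (hindep : iIndepFun ε μ)
    (hident : ∀ s t, IdentDistrib (ε s) (ε t) μ μ)
    (hmeanε : ∀ t, μ[ε t] = Eε) (hvarε : ∀ t, variance (ε t) μ = σ2)
    -- ε^t independent of past W's
    (hpast : ∀ s t : ℤ, s < t → IndepFun (W s) (ε t) μ)
    -- weak stationarity
    (hL2 : ∀ t, MemLp (W t) 2 μ)
    (hstatmean : ∀ s t, μ[W s] = μ[W t])
    (ρ : ℤ → ℝ)
    (hstatcov : ∀ t h : ℤ,
      (μ[fun ω => W t ω * W (t + h) ω]) - μ[W t] * μ[W (t + h)] = ρ h)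
    (t : ℤ)
    -- residual distributional variation δ²_K(β)
    (δ2 : ℕ → (ℕ → ℝ) → ℝ)
    (hδ2 : ∀ (K : ℕ) (β : ℕ → ℝ),
      δ2 K β = μ[fun ω => (W t ω - ∑ k ∈ Finset.Icc 1 K, β k * W (t - (k : ℤ)) ω) ^ 2]) :
    (∀ K : ℕ, 1 ≤ K →
      (∀ k ∈ Finset.Icc 1 K, 0 ≤ (if k = 1 then φ else 0) + (1 - φ) / (K : ℝ)) ∧
      (∑ k ∈ Finset.Icc 1 K, ((if k = 1 then φ else 0) + (1 - φ) / (K : ℝ)) = 1)) ∧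
    Tendsto
      (fun K : ℕ =>
        δ2 K (fun k => (if k = 1 then φ else 0) + (1 - φ) / (K : ℝ)) -
          sInf {x : ℝ | ∃ β : ℕ → ℝ, (∀ k, 0 ≤ β k) ∧
            (∑ k ∈ Finset.Icc 1 K, β k = 1) ∧ x = δ2 K β})
      atTop (nhds 0) := by
  classical
  have intW : ∀ s, Integrable (W s) μ := fun s => (hL2 s).integrable one_le_two
  have memε : ∀ s, MemLp (ε s) 2 μ := by
    intro s
    have hmem : MemLp (fun ω => W s ω - (c + φ * W (s-1) ω)) 2 μ :=
      (hL2 s).sub ((memLp_const c).add ((hL2 (s-1)).const_mul φ))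
    apply hmem.ae_eq
    filter_upwards [hrec s] with ω hω
    rw [hω]; ring
  have intε : ∀ s, Integrable (ε s) μ := fun s => (memε s).integrable one_le_two
  have intWW : ∀ s u, Integrable (fun ω => W s ω * W u ω) μ := fun s u => mulInt (hL2 s) (hL2 u)
  have intεW : ∀ s u, Integrable (fun ω => ε s ω * W u ω) μ := fun s u => mulInt (memε s) (hL2 u)
  set m := μ[W t] with hm_def
  have hm : ∀ s, μ[W s] = m := fun s => hstatmean s t
  have hmW : ∀ s u : ℤ, μ[fun ω => W s ω * W u ω] = ρ (u - s) + m * m := by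
    intro s u
    have h := hstatcov s (u - s)
    rw [show s + (u - s) = u from by ring] at h
    rw [hm, hm] at h
    linarith
  have cross : ∀ u s : ℤ, s < u → μ[fun ω => ε u ω * W s ω] = Eε * m := by
    intro u s hsu
    have h := ((hpast s u hsu).symm.integral_mul_eq_mul_integral (memε u).aestronglyMeasurable
      (hL2 s).aestronglyMeasurable)
    simp only [Pi.mul_apply] at h
    rw [hmeanε, hm] at h
    exact h
  have crossW : ∀ u s : ℤ, s < u → μ[fun ω => W s ω * ε u ω] = m * Eε := by
    intro u s hsu
    have h := ((hpast s u hsu).integral_mul_eq_mul_integral (hL2 s).aestronglyMeasurable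
      (memε u).aestronglyMeasurable)
    simp only [Pi.mul_apply] at h
    rw [hmeanε, hm] at h
    exact h
  have hmrec : m = c + φ * m + Eε := by
    have h1 : μ[W t] = μ[fun ω => c + φ * W (t-1) ω + ε t ω] := integral_congr_ae (hrec t)
    have hint1 : Integrable (fun ω => c + φ * W (t-1) ω) μ :=
      (integrable_const c).add ((intW (t-1)).const_mul φ)
    rw [integral_add hint1 (intε t),
      integral_add (integrable_const c) ((intW (t-1)).const_mul φ),
      integral_const_mul, integral_const, hm (t-1), hmeanε] at h1
    simpa using h1
  have key : (1 - φ) * m = c + Eε := by linarith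
  have formula : ∀ (K : ℕ) (β : ℕ → ℝ), (∑ k ∈ Finset.Icc 1 K, β k = 1) →
      δ2 K β = σ2 - Eε^2 +
        μ[fun ω => (c + φ * W (t-1) ω - ∑ k ∈ Finset.Icc 1 K, β k * W (t-(k:ℤ)) ω)^2] ∧
      μ[fun ω => c + φ * W (t-1) ω - ∑ k ∈ Finset.Icc 1 K, β k * W (t-(k:ℤ)) ω] = - Eε ∧
      MemLp (fun ω => c + φ * W (t-1) ω - ∑ k ∈ Finset.Icc 1 K, β k * W (t-(k:ℤ)) ω) 2 μ := by
    intro K β hβ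
    have memsum : MemLp (fun ω => ∑ k ∈ Finset.Icc 1 K, β k * W (t-(k:ℤ)) ω) 2 μ := by
      apply memLp_finset_sum
      intro k _
      exact (hL2 (t-(k:ℤ))).const_mul (β k)
    have memY : MemLp (fun ω => c + φ * W (t-1) ω - ∑ k ∈ Finset.Icc 1 K, β k * W (t-(k:ℤ)) ω) 2 μ :=
      ((memLp_const c).add ((hL2 (t-1)).const_mul φ)).sub memsum
    have intsum : Integrable (fun ω => ∑ k ∈ Finset.Icc 1 K, β k * W (t-(k:ℤ)) ω) μ :=
      memsum.integrable one_le_two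
    have hint1 : Integrable (fun ω => c + φ * W (t-1) ω) μ :=
      (integrable_const c).add ((intW (t-1)).const_mul φ)
    have hEsum : μ[fun ω => ∑ k ∈ Finset.Icc 1 K, β k * W (t-(k:ℤ)) ω] = m := by
      rw [integral_finset_sum _ (fun (k:ℕ) _ => ((intW (t-(k:ℤ))).const_mul (β k)))]
      have e : ∀ k ∈ Finset.Icc 1 K, μ[fun ω => β k * W (t-(k:ℤ)) ω] = β k * m := by
        intro k _; rw [integral_const_mul, hm]
      rw [Finset.sum_congr rfl e, ← Finset.sum_mul, hβ, one_mul]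
    have hEY : μ[fun ω => c + φ * W (t-1) ω - ∑ k ∈ Finset.Icc 1 K, β k * W (t-(k:ℤ)) ω] = - Eε := by
      rw [integral_sub hint1 intsum,
        integral_add (integrable_const c) ((intW (t-1)).const_mul φ),
        integral_const_mul, integral_const, hEsum, hm]
      simp only [measure_univ, probReal_univ, ENNReal.toReal_one, smul_eq_mul, one_mul]
      linarith
    have hεY_int : Integrable (fun ω => ε t ω *
        (c + φ * W (t-1) ω - ∑ k ∈ Finset.Icc 1 K, β k * W (t-(k:ℤ)) ω)) μ := mulInt (memε t) memY
    have hY2_int : Integrable (fun ω =>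
        (c + φ * W (t-1) ω - ∑ k ∈ Finset.Icc 1 K, β k * W (t-(k:ℤ)) ω)^2) μ := memY.integrable_sq
    have hε2_int : Integrable (fun ω => ε t ω ^ 2) μ := (memε t).integrable_sq
    have hε2 : μ[fun ω => ε t ω^2] = σ2 + Eε^2 := by
      have h := variance_eq_sub (memε t)
      rw [hvarε, hmeanε] at h
      simp only [Pi.pow_apply] at h
      linarith
    have hεY : μ[fun ω => ε t ω *
        (c + φ * W (t-1) ω - ∑ k ∈ Finset.Icc 1 K, β k * W (t-(k:ℤ)) ω)] = -(Eε^2) := by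
      have e2 : ∀ ω, ε t ω * (∑ k ∈ Finset.Icc 1 K, β k * W (t-(k:ℤ)) ω)
          = ∑ k ∈ Finset.Icc 1 K, β k * (ε t ω * W (t-(k:ℤ)) ω) := by
        intro ω; rw [Finset.mul_sum]; exact Finset.sum_congr rfl fun k _ => by ring
      have e0 : (fun ω => ε t ω * (c + φ * W (t-1) ω - ∑ k ∈ Finset.Icc 1 K, β k * W (t-(k:ℤ)) ω))
          = (fun ω => (c * ε t ω + φ * (ε t ω * W (t-1) ω))
              - ∑ k ∈ Finset.Icc 1 K, β k * (ε t ω * W (t-(k:ℤ)) ω)) := by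
        funext ω
        rw [mul_sub, e2 ω]
        ring
      have intA : Integrable (fun ω => c * ε t ω + φ * (ε t ω * W (t-1) ω)) μ :=
        ((intε t).const_mul c).add ((intεW t (t-1)).const_mul φ)
      have intB : Integrable (fun ω => ∑ k ∈ Finset.Icc 1 K, β k * (ε t ω * W (t-(k:ℤ)) ω)) μ :=
        integrable_finset_sum _ (fun (k:ℕ) _ => (intεW t (t-(k:ℤ))).const_mul (β k))
      rw [e0, integral_sub intA intB,
        integral_add ((intε t).const_mul c) ((intεW t (t-1)).const_mul φ),
        integral_const_mul, integral_const_mul, hmeanε, cross t (t-1) (by omega),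
        integral_finset_sum _ (fun (k:ℕ) _ => (intεW t (t-(k:ℤ))).const_mul (β k))]
      have e3 : ∀ k ∈ Finset.Icc 1 K, μ[fun ω => β k * (ε t ω * W (t-(k:ℤ)) ω)] = β k * (Eε * m) := by
        intro k hk
        simp only [Finset.mem_Icc] at hk
        rw [integral_const_mul, cross t (t-(k:ℤ)) (by omega)]
      rw [Finset.sum_congr rfl e3, ← Finset.sum_mul, hβ, one_mul]
      linear_combination (-Eε) * key
    have hae : (fun ω => (W t ω - ∑ k ∈ Finset.Icc 1 K, β k * W (t-(k:ℤ)) ω)^2) =ᵐ[μ]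
        (fun ω => ε t ω^2
          + 2*(ε t ω * (c + φ * W (t-1) ω - ∑ k ∈ Finset.Icc 1 K, β k * W (t-(k:ℤ)) ω))
          + (c + φ * W (t-1) ω - ∑ k ∈ Finset.Icc 1 K, β k * W (t-(k:ℤ)) ω)^2) := by
      filter_upwards [hrec t] with ω hω
      rw [hω]; ring
    have h2εY_int : Integrable (fun ω => 2 * (ε t ω *
        (c + φ * W (t-1) ω - ∑ k ∈ Finset.Icc 1 K, β k * W (t-(k:ℤ)) ω))) μ :=
      hεY_int.const_mul 2
    have hsum1 : Integrable (fun ω => ε t ω ^ 2 + 2 * (ε t ω *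
        (c + φ * W (t-1) ω - ∑ k ∈ Finset.Icc 1 K, β k * W (t-(k:ℤ)) ω))) μ :=
      hε2_int.add h2εY_int
    have hδval : δ2 K β = σ2 - Eε^2 +
        μ[fun ω => (c + φ * W (t-1) ω - ∑ k ∈ Finset.Icc 1 K, β k * W (t-(k:ℤ)) ω)^2] := by
      rw [hδ2 K β, integral_congr_ae hae,
        integral_add hsum1 hY2_int,
        integral_add hε2_int h2εY_int,
        integral_const_mul, hε2, hεY]
      ring
    exact ⟨hδval, hEY, memY⟩
  have hlow : ∀ (K : ℕ) (β : ℕ → ℝ), (∑ k ∈ Finset.Icc 1 K, β k = 1) → σ2 ≤ δ2 K β := by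
    intro K β hβ
    obtain ⟨h1, h2, memY⟩ := formula K β hβ
    have hv := variance_eq_sub memY
    have hnn := variance_nonneg
      (fun ω => c + φ * W (t-1) ω - ∑ k ∈ Finset.Icc 1 K, β k * W (t-(k:ℤ)) ω) μ
    simp only [Pi.pow_apply] at hv
    rw [h2, neg_sq] at hv
    linarith
  -- ρ facts
  have hρ0 : 0 ≤ ρ 0 := by
    have h := hstatcov t 0
    rw [show t + (0:ℤ) = t from by ring] at h
    have hv := variance_eq_sub (hL2 t)
    have hnn := variance_nonneg (W t) μ
    simp only [Pi.pow_apply] at hv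
    have e : μ[fun ω => W t ω * W t ω] = μ[fun ω => W t ω ^ 2] := by
      refine congrArg _ ?_
      funext ω; ring
    rw [e] at h
    rw [← hm_def] at h
    nlinarith
  have hρsucc : ∀ n : ℕ, ρ ((n:ℤ)+1) = φ * ρ (n:ℤ) := by
    intro n
    have h := hstatcov t ((n:ℤ)+1)
    have hae : (fun ω => W t ω * W (t + ((n:ℤ)+1)) ω) =ᵐ[μ]
        (fun ω => c * W t ω + φ * (W t ω * W (t + (n:ℤ)) ω) + W t ω * ε (t + (n:ℤ) + 1) ω) := by
      filter_upwards [hrec (t + (n:ℤ) + 1)] with ω hω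
      rw [show t + ((n:ℤ)+1) = t + (n:ℤ) + 1 from by ring, hω,
        show t + (n:ℤ) + 1 - 1 = t + (n:ℤ) from by ring]
      ring
    have intA : Integrable (fun ω => c * W t ω + φ * (W t ω * W (t + (n:ℤ)) ω)) μ :=
      ((intW t).const_mul c).add ((intWW t (t + (n:ℤ))).const_mul φ)
    have intB : Integrable (fun ω => W t ω * ε (t + (n:ℤ) + 1) ω) μ :=
      mulInt (hL2 t) (memε (t + (n:ℤ) + 1))
    rw [integral_congr_ae hae, integral_add intA intB,
      integral_add ((intW t).const_mul c) ((intWW t (t + (n:ℤ))).const_mul φ),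
      integral_const_mul, integral_const_mul, hm, hmW t (t + (n:ℤ)),
      crossW (t + (n:ℤ) + 1) t (by omega), hm (t + ((n:ℤ)+1)),
      show (t + (n:ℤ)) - t = (n:ℤ) from by ring] at h
    linear_combination -h - m * hmrec
  have hρnat : ∀ n : ℕ, ρ (n:ℤ) = φ^n * ρ 0 := by
    intro n
    induction n with
    | zero => simp
    | succ n ih =>
      have h := hρsucc n
      rw [ih] at h
      push_cast
      rw [h]; ring
  have hρneg : ∀ d : ℤ, ρ (-d) = ρ d := by
    intro d
    have h1 := hstatcov t d
    have h2 := hstatcov (t + d) (-d)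
    rw [show t + d + -d = t from by ring] at h2
    have e : μ[fun ω => W (t+d) ω * W t ω] = μ[fun ω => W t ω * W (t+d) ω] := by
      refine congrArg _ ?_
      funext ω; ring
    rw [e] at h2
    rw [hm, hm] at h1 h2
    nlinarith
  have hρall : ∀ d : ℤ, ρ d = φ^(d.natAbs) * ρ 0 := by
    intro d
    rcases Int.natAbs_eq d with h | h
    · conv_lhs => rw [h]
      rw [hρnat]
    · conv_lhs => rw [h]
      rw [hρneg, hρnat]
  have part1 : ∀ K : ℕ, 1 ≤ K →
      (∀ k ∈ Finset.Icc 1 K, 0 ≤ (if k = 1 then φ else 0) + (1 - φ) / (K : ℝ)) ∧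
      (∑ k ∈ Finset.Icc 1 K, ((if k = 1 then φ else 0) + (1 - φ) / (K : ℝ)) = 1) := by
    intro K hK
    have hKpos : (0:ℝ) < K := by exact_mod_cast hK
    constructor
    · intro k _
      have h2 : 0 ≤ (1 - φ)/(K:ℝ) := div_nonneg (by linarith) hKpos.le
      split_ifs <;> linarith
    · rw [Finset.sum_add_distrib, Finset.sum_ite_eq' (Finset.Icc 1 K) 1 (fun _ => φ),
        Finset.sum_const, Nat.card_Icc]
      rw [if_pos (by simp [Finset.mem_Icc, hK])]
      rw [show K + 1 - 1 = K from by omega, nsmul_eq_mul]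
      field_simp
      ring
  have hupper : ∀ K : ℕ, 1 ≤ K →
      δ2 K (fun k => (if k = 1 then φ else 0) + (1 - φ) / (K : ℝ)) - σ2
        ≤ 2*(1-φ)*ρ 0 / (K:ℝ) := by
    intro K hK
    have hKpos : (0:ℝ) < K := by exact_mod_cast hK
    have hKne : (K:ℝ) ≠ 0 := hKpos.ne'
    obtain ⟨h1, h2, memY⟩ := formula K _ (part1 K hK).2
    have hYeq : ∀ ω : Ω, c + φ * W (t-1) ω -
        ∑ k ∈ Finset.Icc 1 K, ((if k = 1 then φ else 0) + (1 - φ) / (K : ℝ)) * W (t-(k:ℤ)) ω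
        = c - ((1-φ)/(K:ℝ)) * ∑ k ∈ Finset.Icc 1 K, W (t-(k:ℤ)) ω := by
      intro ω
      have e1 : ∑ k ∈ Finset.Icc 1 K, ((if k = 1 then φ else 0) + (1-φ)/(K:ℝ)) * W (t-(k:ℤ)) ω
          = (∑ k ∈ Finset.Icc 1 K, (if k = 1 then φ * W (t-(k:ℤ)) ω else 0))
            + ((1-φ)/(K:ℝ)) * ∑ k ∈ Finset.Icc 1 K, W (t-(k:ℤ)) ω := by
        rw [Finset.mul_sum, ← Finset.sum_add_distrib]
        exact Finset.sum_congr rfl fun k _ => by split_ifs <;> ring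
      rw [e1, Finset.sum_ite_eq' (Finset.Icc 1 K) 1 (fun k => φ * W (t-(k:ℤ)) ω),
        if_pos (by simp [Finset.mem_Icc, hK])]
      push_cast
      ring
    simp only [hYeq] at h1 h2
    set a := (1-φ)/(K:ℝ) with ha
    have intS : Integrable (fun ω => ∑ k ∈ Finset.Icc 1 K, W (t-(k:ℤ)) ω) μ :=
      integrable_finset_sum _ (fun (k:ℕ) _ => intW (t-(k:ℤ)))
    have memS : MemLp (fun ω => ∑ k ∈ Finset.Icc 1 K, W (t-(k:ℤ)) ω) 2 μ :=
      memLp_finset_sum _ (fun (k:ℕ) _ => hL2 (t-(k:ℤ)))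
    have hES : μ[fun ω => ∑ k ∈ Finset.Icc 1 K, W (t-(k:ℤ)) ω] = (K:ℝ) * m := by
      rw [integral_finset_sum _ (fun (k:ℕ) _ => intW (t-(k:ℤ)))]
      rw [Finset.sum_congr rfl (fun (k:ℕ) _ => hm (t-(k:ℤ)))]
      rw [Finset.sum_const, Nat.card_Icc, show K + 1 - 1 = K from by omega, nsmul_eq_mul]
    have hES2 : μ[fun ω => (∑ k ∈ Finset.Icc 1 K, W (t-(k:ℤ)) ω)^2]
        = (∑ i ∈ Finset.Icc 1 K, ∑ j ∈ Finset.Icc 1 K, ρ ((i:ℤ) - (j:ℤ))) + (K:ℝ)^2 * (m*m) := by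
      have e1 : ∀ ω : Ω, (∑ k ∈ Finset.Icc 1 K, W (t-(k:ℤ)) ω)^2
          = ∑ i ∈ Finset.Icc 1 K, ∑ j ∈ Finset.Icc 1 K, W (t-(i:ℤ)) ω * W (t-(j:ℤ)) ω := by
        intro ω; rw [sq, Finset.sum_mul_sum]
      simp only [e1]
      rw [integral_finset_sum _ (fun (i:ℕ) _ =>
        integrable_finset_sum _ (fun (j:ℕ) _ => intWW (t-(i:ℤ)) (t-(j:ℤ))))]
      have e2 : ∀ i ∈ Finset.Icc 1 K,
          μ[fun ω => ∑ j ∈ Finset.Icc 1 K, W (t-(i:ℤ)) ω * W (t-(j:ℤ)) ω]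
          = ∑ j ∈ Finset.Icc 1 K, (ρ ((i:ℤ)-(j:ℤ)) + m*m) := by
        intro i _
        rw [integral_finset_sum _ (fun (j:ℕ) _ => intWW (t-(i:ℤ)) (t-(j:ℤ)))]
        refine Finset.sum_congr rfl fun j _ => ?_
        rw [hmW (t-(i:ℤ)) (t-(j:ℤ)), show (t-(j:ℤ)) - (t-(i:ℤ)) = (i:ℤ)-(j:ℤ) from by ring]
      rw [Finset.sum_congr rfl e2]
      rw [Finset.sum_congr rfl (fun (i:ℕ) (_ : i ∈ Finset.Icc 1 K) => Finset.sum_add_distrib)]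
      rw [Finset.sum_add_distrib]
      congr 1
      rw [Finset.sum_const, Finset.sum_const, Nat.card_Icc,
        show K + 1 - 1 = K from by omega, nsmul_eq_mul, nsmul_eq_mul]
      ring
    have hY2val : μ[fun ω => (c - a * ∑ k ∈ Finset.Icc 1 K, W (t-(k:ℤ)) ω)^2]
        = c^2 - 2*a*c*((K:ℝ)*m)
          + a^2 * ((∑ i ∈ Finset.Icc 1 K, ∑ j ∈ Finset.Icc 1 K, ρ ((i:ℤ)-(j:ℤ))) + (K:ℝ)^2*(m*m)) := by
      have e : ∀ ω : Ω, (c - a * ∑ k ∈ Finset.Icc 1 K, W (t-(k:ℤ)) ω)^2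
          = (c^2 - (2*a*c) * ∑ k ∈ Finset.Icc 1 K, W (t-(k:ℤ)) ω)
            + a^2 * (∑ k ∈ Finset.Icc 1 K, W (t-(k:ℤ)) ω)^2 := fun ω => by ring
      simp only [e]
      have intq : Integrable (fun ω => a^2 * (∑ k ∈ Finset.Icc 1 K, W (t-(k:ℤ)) ω)^2) μ :=
        memS.integrable_sq.const_mul _
      have intl : Integrable (fun ω => c^2 - (2*a*c) * ∑ k ∈ Finset.Icc 1 K, W (t-(k:ℤ)) ω) μ :=
        (integrable_const _).sub (intS.const_mul _)
      rw [integral_add intl intq, integral_sub (integrable_const _) (intS.const_mul _),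
        integral_const_mul, integral_const_mul, integral_const, hES, hES2]
      simp only [measure_univ, probReal_univ, ENNReal.toReal_one, smul_eq_mul, one_mul]
    have hEY2 : c - a*((K:ℝ)*m) = -Eε := by
      rw [integral_sub (integrable_const c) (intS.const_mul a), integral_const_mul,
        integral_const, hES] at h2
      simpa using h2
    have hsum_bound : (∑ i ∈ Finset.Icc 1 K, ∑ j ∈ Finset.Icc 1 K, ρ ((i:ℤ)-(j:ℤ)))
        ≤ ρ 0 * (2*(K:ℝ)/(1-φ)) := by
      have e3 : ∀ i ∈ Finset.Icc 1 K, ∑ j ∈ Finset.Icc 1 K, ρ ((i:ℤ)-(j:ℤ))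
          = ∑ j ∈ Finset.Icc 1 K, φ^(((i:ℤ)-(j:ℤ)).natAbs) * ρ 0 :=
        fun i _ => Finset.sum_congr rfl fun j _ => hρall _
      rw [Finset.sum_congr rfl e3]
      have e4 : ∑ i ∈ Finset.Icc 1 K, ∑ j ∈ Finset.Icc 1 K, φ^(((i:ℤ)-(j:ℤ)).natAbs) * ρ 0
          = (∑ i ∈ Finset.Icc 1 K, ∑ j ∈ Finset.Icc 1 K, φ^(((i:ℤ)-(j:ℤ)).natAbs)) * ρ 0 := by
        rw [Finset.sum_mul]
        exact Finset.sum_congr rfl fun i _ => (Finset.sum_mul _ _ _).symm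
      rw [e4]
      calc (∑ i ∈ Finset.Icc 1 K, ∑ j ∈ Finset.Icc 1 K, φ^(((i:ℤ)-(j:ℤ)).natAbs)) * ρ 0
          ≤ (2*(K:ℝ)/(1-φ)) * ρ 0 :=
            mul_le_mul_of_nonneg_right (doubleGeomBound hφ0.le hφ1 K) hρ0
        _ = ρ 0 * (2*(K:ℝ)/(1-φ)) := by ring
    have hφne : (1:ℝ) - φ ≠ 0 := by linarith
    have ha2 : a^2 * (ρ 0 * (2*(K:ℝ)/(1-φ))) = 2*(1-φ)*ρ 0/(K:ℝ) := by
      rw [ha, div_pow]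
      field_simp
    have aux : a^2 * (∑ i ∈ Finset.Icc 1 K, ∑ j ∈ Finset.Icc 1 K, ρ ((i:ℤ)-(j:ℤ)))
        ≤ 2*(1-φ)*ρ 0/(K:ℝ) := by
      calc a^2 * (∑ i ∈ Finset.Icc 1 K, ∑ j ∈ Finset.Icc 1 K, ρ ((i:ℤ)-(j:ℤ)))
          ≤ a^2 * (ρ 0 * (2*(K:ℝ)/(1-φ))) :=
            mul_le_mul_of_nonneg_left hsum_bound (sq_nonneg a)
        _ = 2*(1-φ)*ρ 0/(K:ℝ) := ha2
    rw [h1, hY2val]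
    have expand : σ2 - Eε^2 + (c^2 - 2*a*c*((K:ℝ)*m)
        + a^2 * ((∑ i ∈ Finset.Icc 1 K, ∑ j ∈ Finset.Icc 1 K, ρ ((i:ℤ)-(j:ℤ))) + (K:ℝ)^2*(m*m))) - σ2
        = a^2 * (∑ i ∈ Finset.Icc 1 K, ∑ j ∈ Finset.Icc 1 K, ρ ((i:ℤ)-(j:ℤ))) := by
      linear_combination (c - a*((K:ℝ)*m) - Eε) * hEY2
    linarith [aux, expand]
  -- final assembly
  have hlb : ∀ K : ℕ, ∀ x ∈ {x : ℝ | ∃ β : ℕ → ℝ, (∀ k, 0 ≤ β k) ∧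
      (∑ k ∈ Finset.Icc 1 K, β k = 1) ∧ x = δ2 K β}, σ2 ≤ x := by
    rintro K x ⟨β, hβ0, hβ1, rfl⟩
    exact hlow K β hβ1
  have hmem : ∀ K : ℕ, 1 ≤ K →
      δ2 K (fun k => (if k = 1 then φ else 0) + (1 - φ) / (K:ℝ)) ∈ {x : ℝ | ∃ β : ℕ → ℝ,
        (∀ k, 0 ≤ β k) ∧ (∑ k ∈ Finset.Icc 1 K, β k = 1) ∧ x = δ2 K β} := by
    intro K hK
    refine ⟨_, ?_, (part1 K hK).2, rfl⟩
    intro k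
    have hKpos : (0:ℝ) < K := by exact_mod_cast hK
    have h3 : 0 ≤ (1-φ)/(K:ℝ) := div_nonneg (by linarith) hKpos.le
    split_ifs <;> linarith
  have final : Tendsto
      (fun K : ℕ =>
        δ2 K (fun k => (if k = 1 then φ else 0) + (1 - φ) / (K : ℝ)) -
          sInf {x : ℝ | ∃ β : ℕ → ℝ, (∀ k, 0 ≤ β k) ∧
            (∑ k ∈ Finset.Icc 1 K, β k = 1) ∧ x = δ2 K β})
      atTop (nhds 0) := by
    apply tendsto_of_tendsto_of_tendsto_of_le_of_le' tendsto_const_nhds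
      (tendsto_const_div_atTop_nhds_zero_nat (2*(1-φ)*ρ 0))
    · filter_upwards [eventually_ge_atTop 1] with K hK
      have h := csInf_le ⟨σ2, hlb K⟩ (hmem K hK)
      linarith
    · filter_upwards [eventually_ge_atTop 1] with K hK
      have h := le_csInf ⟨_, hmem K hK⟩ (hlb K)
      have h2 := hupper K hK
      linarith
  exact ⟨part1, final⟩
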